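/- arXiv:0907.1734 — 4 statements merged into one kernel-verified Lean document; each statement's English description precedes it below -/
import Mathlib

section
/- Let K be a field of characteristic 2 and let f be a polynomial in one variable over K whose degree d satisfies d ≥ 3 and d is not a power of 2. Then the quotient polynomial P_f(x,y,z) = (f(x)+f(y)+f(z)+f(x+y+z))/((x+y)(x+z)(y+z)) has total degree exactly d − 3. -/
open MvPolynomial

/-! The leading term `a X^d` of `f` contributes `a (x^d + y^d + z^d + (x+y+z)^d)` to the numerator,
a form of degree exactly `d`, while the rest of `f` contributes only in degree `< d`. That form is
nonzero when `d` is not a power of 2: writing `d = 2^k e` with `e ≥ 3` odd and specialising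
`(x, y, z) ↦ (X, 1, 0)`, Frobenius turns it into `(X^e + 1 + (X+1)^e)^(2^k)`, whose base has
coefficient `e = 1` at `X^(e-1)`. The denominator is a nonzero cubic, so degrees subtract. -/

theorem MvPolynomial.totalDegree_aeval_le {σ R : Type*} [CommSemiring R]
    (g : MvPolynomial σ R) (p : Polynomial R) :
    (Polynomial.aeval g p).totalDegree ≤ p.natDegree * g.totalDegree := by
  rw [Polynomial.aeval_eq_sum_range]
  refine (totalDegree_finsetSum _ _).trans (Finset.sup_le fun i hi => ?_)
  calc (p.coeff i • g ^ i).totalDegree ≤ (g ^ i).totalDegree := totalDegree_smul_le _ _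
    _ ≤ i * g.totalDegree := totalDegree_pow _ _
    _ ≤ p.natDegree * g.totalDegree :=
      Nat.mul_le_mul_right _ (Nat.lt_succ_iff.mp (Finset.mem_range.mp hi))

theorem MvPolynomial.X_add_X_ne_zero {σ R : Type*} [CommSemiring R] [Nontrivial R]
    {i j : σ} (hij : i ≠ j) : (X i + X j : MvPolynomial σ R) ≠ 0 := by
  classical
  intro h
  have := congrArg (coeff (Finsupp.single i 1)) h
  simp [coeff_X, Finsupp.single_left_inj one_ne_zero, hij.symm] at this

namespace Polynomial

variable {R : Type*} [CommRing R] [CharP R 2]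

theorem X_pow_add_one_add_X_add_one_pow_ne_zero_of_odd [Nontrivial R] {e : ℕ} (he : Odd e)
    (he1 : e ≠ 1) : (X ^ e + 1 + (X + 1) ^ e : R[X]) ≠ 0 := by
  obtain ⟨m, rfl⟩ := he
  have hm : m ≠ 0 := by rintro rfl; exact he1 rfl
  intro h
  have hcoeff := congrArg (coeff · (2 * m)) h
  simp only [coeff_add, coeff_X_pow, coeff_one, coeff_X_add_one_pow, coeff_zero] at hcoeff
  rw [if_neg (by omega), if_neg (by omega), Nat.choose_symm_of_eq_add (b := 1) rfl,
    Nat.choose_one_right, zero_add, zero_add] at hcoeff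
  simp [CharTwo.two_eq_zero] at hcoeff

theorem X_pow_add_one_add_X_add_one_pow_ne_zero [IsDomain R] {d : ℕ} (hd0 : d ≠ 0)
    (hd : ¬∃ k : ℕ, d = 2 ^ k) : (X ^ d + 1 + (X + 1) ^ d : R[X]) ≠ 0 := by
  obtain ⟨k, e, he, rfl⟩ := Nat.exists_eq_two_pow_mul_odd hd0
  have he1 : e ≠ 1 := by rintro rfl; exact hd ⟨k, mul_one _⟩
  have hfrob : (X ^ (2 ^ k * e) + 1 + (X + 1) ^ (2 ^ k * e) : R[X]) =
      (X ^ e + 1 + (X + 1) ^ e) ^ 2 ^ k := by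
    rw [add_pow_char_pow, add_pow_char_pow, one_pow, ← pow_mul, ← pow_mul, mul_comm e]
  rw [hfrob]
  exact pow_ne_zero _ (X_pow_add_one_add_X_add_one_pow_ne_zero_of_odd he he1)

end Polynomial

section FourPointSum

variable {R : Type*} [CommRing R]

noncomputable def fourPointSum : Polynomial R →ₗ[R] MvPolynomial (Fin 3) R :=
  (Polynomial.aeval (X 0)).toLinearMap + (Polynomial.aeval (X 1)).toLinearMap +
    (Polynomial.aeval (X 2)).toLinearMap + (Polynomial.aeval (X 0 + X 1 + X 2)).toLinearMap

theorem fourPointSum_apply (p : Polynomial R) :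
    fourPointSum p = Polynomial.aeval (X 0) p + Polynomial.aeval (X 1) p +
      Polynomial.aeval (X 2) p + Polynomial.aeval (X 0 + X 1 + X 2) p :=
  rfl

theorem totalDegree_fourPointSum_le (p : Polynomial R) :
    (fourPointSum p).totalDegree ≤ p.natDegree := by
  have hlin : ∀ g : MvPolynomial (Fin 3) R, g.totalDegree ≤ 1 →
      (Polynomial.aeval g p).totalDegree ≤ p.natDegree := fun g hg =>
    (totalDegree_aeval_le g p).trans (by simpa using Nat.mul_le_mul_left p.natDegree hg)
  have hX : ∀ i : Fin 3, (X i : MvPolynomial (Fin 3) R).totalDegree ≤ 1 :=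
    fun i => (isHomogeneous_X R i).totalDegree_le
  have hS : (X 0 + X 1 + X 2 : MvPolynomial (Fin 3) R).totalDegree ≤ 1 :=
    (((isHomogeneous_X R 0).add (isHomogeneous_X R 1)).add (isHomogeneous_X R 2)).totalDegree_le
  rw [fourPointSum_apply]
  refine (totalDegree_add _ _).trans (max_le ?_ (hlin _ hS))
  refine (totalDegree_add _ _).trans (max_le ?_ (hlin _ (hX 2)))
  exact (totalDegree_add _ _).trans (max_le (hlin _ (hX 0)) (hlin _ (hX 1)))

theorem isHomogeneous_fourPointSum_X_pow (d : ℕ) :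
    (fourPointSum (Polynomial.X ^ d : Polynomial R)).IsHomogeneous d := by
  have hS : (X 0 + X 1 + X 2 : MvPolynomial (Fin 3) R).IsHomogeneous 1 :=
    ((isHomogeneous_X R 0).add (isHomogeneous_X R 1)).add (isHomogeneous_X R 2)
  simpa [fourPointSum_apply] using
    ((((isHomogeneous_X R 0).pow d).add ((isHomogeneous_X R 1).pow d)).add
      ((isHomogeneous_X R 2).pow d)).add (hS.pow d)

variable [IsDomain R] [CharP R 2]

theorem fourPointSum_X_pow_ne_zero {d : ℕ} (hd0 : d ≠ 0) (hd : ¬∃ k : ℕ, d = 2 ^ k) :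
    fourPointSum (Polynomial.X ^ d : Polynomial R) ≠ 0 := by
  intro h
  have hspec := congrArg (MvPolynomial.aeval (![Polynomial.X, 1, 0] : Fin 3 → Polynomial R)) h
  simp [fourPointSum_apply, zero_pow hd0] at hspec
  exact Polynomial.X_pow_add_one_add_X_add_one_pow_ne_zero hd0 hd hspec

theorem totalDegree_fourPointSum (f : Polynomial R) (hd0 : f.natDegree ≠ 0)
    (hd : ¬∃ k : ℕ, f.natDegree = 2 ^ k) :
    (fourPointSum f).totalDegree = f.natDegree := by
  have hf : f ≠ 0 := by rintro rfl; simp at hd0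
  have hsplit : fourPointSum f = C f.leadingCoeff * fourPointSum (Polynomial.X ^ f.natDegree) +
      fourPointSum f.eraseLead := by
    conv_lhs => rw [← f.eraseLead_add_C_mul_X_pow, add_comm]
    rw [map_add, ← smul_eq_C_mul, ← map_smul, Polynomial.smul_eq_C_mul]
  have hlead : (C f.leadingCoeff * fourPointSum (Polynomial.X ^ f.natDegree)).totalDegree =
      f.natDegree := by
    have hhom := (isHomogeneous_C (Fin 3) f.leadingCoeff).mul
      (isHomogeneous_fourPointSum_X_pow (R := R) f.natDegree)
    rw [zero_add] at hhom
    exact hhom.totalDegree (mul_ne_zero (C_ne_zero.mpr (Polynomial.leadingCoeff_ne_zero.mpr hf))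
      (fourPointSum_X_pow_ne_zero hd0 hd))
  have htail : (fourPointSum f.eraseLead).totalDegree < f.natDegree :=
    (totalDegree_fourPointSum_le _).trans_lt
      (lt_of_le_of_lt (Polynomial.eraseLead_natDegree_le f) (by omega))
  rw [hsplit, totalDegree_add_eq_left_of_totalDegree_lt (by rwa [hlead]), hlead]

end FourPointSum

/-- For a field `K` of characteristic 2 and a univariate polynomial `f` over `K`
of degree `d ≥ 3` not a power of 2, the quotient polynomial
`P_f = (f(x)+f(y)+f(z)+f(x+y+z))/((x+y)(x+z)(y+z))` has total degree exactly `d - 3`. -/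
theorem stmt_4 {K : Type*} [Field K] [CharP K 2] (f : Polynomial K)
    (hd3 : 3 ≤ f.natDegree) (hd2 : ¬∃ k : ℕ, f.natDegree = 2 ^ k)
    (P : MvPolynomial (Fin 3) K)
    (hP : ((X 0 + X 1) * (X 0 + X 2) * (X 1 + X 2) : MvPolynomial (Fin 3) K) * P =
      Polynomial.aeval (X 0 : MvPolynomial (Fin 3) K) f +
        Polynomial.aeval (X 1 : MvPolynomial (Fin 3) K) f +
        Polynomial.aeval (X 2 : MvPolynomial (Fin 3) K) f +
        Polynomial.aeval (X 0 + X 1 + X 2 : MvPolynomial (Fin 3) K) f) :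
    P.totalDegree = f.natDegree - 3 := by
  rw [← fourPointSum_apply] at hP
  have hlin : ∀ i j : Fin 3, (X i + X j : MvPolynomial (Fin 3) K).IsHomogeneous 1 :=
    fun i j => (isHomogeneous_X K i).add (isHomogeneous_X K j)
  have hQ0 : ((X 0 + X 1) * (X 0 + X 2) * (X 1 + X 2) : MvPolynomial (Fin 3) K) ≠ 0 :=
    mul_ne_zero (mul_ne_zero (X_add_X_ne_zero (by decide)) (X_add_X_ne_zero (by decide)))
      (X_add_X_ne_zero (by decide))
  have hQ : ((X 0 + X 1) * (X 0 + X 2) * (X 1 + X 2) : MvPolynomial (Fin 3) K).totalDegree = 3 :=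
    (((hlin 0 1).mul (hlin 0 2)).mul (hlin 1 2)).totalDegree hQ0
  have hnum := totalDegree_fourPointSum f (by omega) hd2
  have hP0 : P ≠ 0 := by
    rintro rfl
    rw [mul_zero, eq_comm] at hP
    rw [hP, totalDegree_zero] at hnum
    omega
  have hdeg := totalDegree_mul_of_isDomain hQ0 hP0
  rw [hP, hnum, hQ] at hdeg
  omega
end

section
/- Let q = 2^m and let f : F_q → F_q be any function. The following two properties are equivalent: (i) there exist α, β ∈ F_q and six pairwise distinct elements x₀, x₁, x₂, x₃, x₄, x₅ ∈ F_q such that x₀+x₁ = x₂+x₃ = x₄+x₅ = α and f(x₀)+f(x₁) = f(x₂)+f(x₃) = f(x₄)+f(x₅) = β; (ii) there exist four pairwise distinct elements x₀, x₁, x₂, x₄ ∈ F_q with x₀+x₁+x₂+x₄ ≠ 0 such that f(x₀)+f(x₁)+f(x₂)+f(x₀+x₁+x₂) = 0 and f(x₀)+f(x₁)+f(x₄)+f(x₀+x₁+x₄) = 0. -/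
/-- The two properties of the key lemma are equivalent:
(i) six pairwise distinct elements forming three pairs with the same sum `α` and the
same value sum `β`;
(ii) four pairwise distinct elements `x₀, x₁, x₂, x₄` with `x₀+x₁+x₂+x₄ ≠ 0` satisfying
the two displayed equations. -/
theorem stmt_5 (m : ℕ) (f : GaloisField 2 m → GaloisField 2 m) :
    (∃ α β x₀ x₁ x₂ x₃ x₄ x₅ : GaloisField 2 m,
      List.Pairwise (· ≠ ·) [x₀, x₁, x₂, x₃, x₄, x₅] ∧
      x₀ + x₁ = α ∧ f x₀ + f x₁ = β ∧
      x₂ + x₃ = α ∧ f x₂ + f x₃ = β ∧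
      x₄ + x₅ = α ∧ f x₄ + f x₅ = β) ↔
    (∃ x₀ x₁ x₂ x₄ : GaloisField 2 m,
      List.Pairwise (· ≠ ·) [x₀, x₁, x₂, x₄] ∧
      x₀ + x₁ + x₂ + x₄ ≠ 0 ∧
      f x₀ + f x₁ + f x₂ + f (x₀ + x₁ + x₂) = 0 ∧
      f x₀ + f x₁ + f x₄ + f (x₀ + x₁ + x₄) = 0) := by
  have htwo : (2 : GaloisField 2 m) = 0 := CharTwo.two_eq_zero
  constructor
  · rintro ⟨α, β, x₀, x₁, x₂, x₃, x₄, x₅, hpw, h01, hf01, h23, hf23, h45, hf45⟩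
    simp only [List.pairwise_cons, List.mem_cons, List.mem_singleton, ne_eq,
      List.not_mem_nil, IsEmpty.forall_iff, implies_true, List.Pairwise.nil, and_true,
      forall_eq_or_imp, forall_eq] at hpw
    obtain ⟨⟨d01, d02, d03, d04, d05⟩, ⟨d12, d13, d14, d15⟩, ⟨d23, d24, d25⟩,
      ⟨d34, d35⟩, d45⟩ := hpw
    have hx3 : x₃ = x₀ + x₁ + x₂ := by linear_combination h23 - h01 - x₂ * htwo
    have hx5 : x₅ = x₀ + x₁ + x₄ := by linear_combination h45 - h01 - x₄ * htwo
    refine ⟨x₀, x₁, x₂, x₄, ?_, ?_, ?_, ?_⟩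
    · simp only [List.pairwise_cons, List.mem_cons, List.mem_singleton, ne_eq,
        List.not_mem_nil, IsEmpty.forall_iff, implies_true, List.Pairwise.nil, and_true,
        forall_eq_or_imp, forall_eq]
      exact ⟨⟨d01, d02, d04⟩, ⟨d12, d14⟩, d24⟩
    · intro h
      apply d34
      rw [hx3]
      linear_combination h - x₄ * htwo
    · rw [← hx3]; linear_combination hf01 + hf23 + β * htwo
    · rw [← hx5]; linear_combination hf01 + hf45 + β * htwo
  · rintro ⟨x₀, x₁, x₂, x₄, hpw, hsum, h1, h2⟩
    simp only [List.pairwise_cons, List.mem_cons, List.mem_singleton, ne_eq,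
      List.not_mem_nil, IsEmpty.forall_iff, implies_true, List.Pairwise.nil, and_true,
      forall_eq_or_imp, forall_eq] at hpw
    obtain ⟨⟨d01, d02, d04⟩, ⟨d12, d14⟩, d24⟩ := hpw
    refine ⟨x₀ + x₁, f x₀ + f x₁, x₀, x₁, x₂, x₀ + x₁ + x₂, x₄, x₀ + x₁ + x₄,
      ?_, rfl, rfl, ?_, ?_, ?_, ?_⟩
    · simp only [List.pairwise_cons, List.mem_cons, List.mem_singleton, ne_eq,
        List.not_mem_nil, IsEmpty.forall_iff, implies_true, List.Pairwise.nil, and_true,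
        forall_eq_or_imp, forall_eq]
      refine ⟨⟨d01, d02, ?_, d04, ?_⟩, ⟨d12, ?_, d14, ?_⟩, ⟨?_, d24, ?_⟩, ⟨?_, ?_⟩, ?_⟩
      · intro h; exact d12 (by linear_combination -h - x₂ * htwo)
      · intro h; exact d14 (by linear_combination -h - x₄ * htwo)
      · intro h; exact d02 (by linear_combination -h - x₂ * htwo)
      · intro h; exact d04 (by linear_combination -h - x₄ * htwo)
      · intro h; exact d01 (by linear_combination -h - x₁ * htwo)
      · intro h; exact hsum (by linear_combination -h + x₂ * htwo)
      · intro h; exact hsum (by linear_combination h + x₄ * htwo)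
      · intro h; exact d24 (by linear_combination h)
      · intro h; exact d01 (by linear_combination -h - x₁ * htwo)
    · linear_combination x₂ * htwo
    · linear_combination h1 - (f x₀ + f x₁) * htwo
    · linear_combination x₄ * htwo
    · linear_combination h2 - (f x₀ + f x₁) * htwo
end

section
/- Let d = 2^r − 1 with r ≥ 3, let K be an algebraically closed field of characteristic 2, and let P ∈ F_2[x,y,z] be the polynomial with (x+y)(x+z)(y+z)·P(x,y,z) = x^d + y^d + z^d + (x+y+z)^d. Then for all x, y, z ∈ K one has P(x, y, z) = 0 if and only if P(x, y, x+z) = 0; equivalently, the intersections of the two cones P(x,y,z) = 0 and P(x,y,t) = 0 in P³(K) with the plane x + z + t = 0 coincide. -/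
open MvPolynomial

/-- Key char-2 ring identity used for the cancellation argument. -/
lemma stmt_9_aux {R : Type*} [CommRing R] (h2 : (2 : R) = 0)
    (x0 x1 x2 u0 u1 u2 us uac ubc a b c : R)
    (h0 : x0 * u0 = a) (h1 : x1 * u1 = b) (hc : x2 * u2 = c)
    (hs : (x0 + x1 + x2) * us = a + b + c)
    (hac : (x0 + x2) * uac = a + c) (hbc : (x1 + x2) * ubc = b + c) :
    x0 * x1 * x2 * (x0 + x1 + x2) * (u0 + u1 + u2 + us) =
      x0 * x1 * (x0 + x2) * (x1 + x2) * (u0 + u1 + uac + ubc) := by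
  linear_combination (x1 * x2 * (x0 + x1 + x2) - x1 * (x0 + x2) * (x1 + x2)) * h0 +
    (x0 * x2 * (x0 + x1 + x2) - x0 * (x0 + x2) * (x1 + x2)) * h1 +
    (x0 * x1 * (x0 + x1 + x2)) * hc + (x0 * x1 * x2) * hs -
    (x0 * x1 * (x1 + x2)) * hac - (x0 * x1 * (x0 + x2)) * hbc -
    (x0 * x1 ^ 2 * a + x0 ^ 2 * x1 * b) * h2

/-- Let `d = 2^r - 1` with `r ≥ 3` and let `P` over `F₂` satisfy
`(x+y)(x+z)(y+z)·P = x^d + y^d + z^d + (x+y+z)^d`. Over an algebraically closed field `K`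
of characteristic 2, `P(x,y,z) = 0` iff `P(x,y,x+z) = 0`: the intersections of the two
cones `P(x,y,z) = 0` and `P(x,y,t) = 0` with the plane `x + z + t = 0` coincide. -/
theorem stmt_9 (r : ℕ) (hr : 3 ≤ r) (d : ℕ) (hd : d = 2 ^ r - 1)
    (K : Type*) [Field K] [IsAlgClosed K] [CharP K 2]
    (P : MvPolynomial (Fin 3) (ZMod 2))
    (hP : ((X 0 + X 1) * (X 0 + X 2) * (X 1 + X 2) : MvPolynomial (Fin 3) (ZMod 2)) * P =
      X 0 ^ d + X 1 ^ d + X 2 ^ d + (X 0 + X 1 + X 2) ^ d) :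
    ∀ x y z : K,
      eval ![x, y, z] (P.map (ZMod.castHom (dvd_refl 2) K)) = 0 ↔
      eval ![x, y, x + z] (P.map (ZMod.castHom (dvd_refl 2) K)) = 0 := by
  haveI : Fact (Nat.Prime 2) := ⟨Nat.prime_two⟩
  set PK : MvPolynomial (Fin 3) K := P.map (ZMod.castHom (dvd_refl 2) K) with hPKdef
  have h2 : (2 : MvPolynomial (Fin 3) K) = 0 := by
    exact_mod_cast CharP.cast_eq_zero (MvPolynomial (Fin 3) K) 2
  have hdN : d + 1 = 2 ^ r := by
    rw [hd]; exact Nat.sub_add_cancel (Nat.one_le_pow r 2 (by norm_num))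
  -- push the defining identity of P to K
  have hPK : ((X 0 + X 1) * (X 0 + X 2) * (X 1 + X 2) : MvPolynomial (Fin 3) K) * PK =
      X 0 ^ d + X 1 ^ d + X 2 ^ d + (X 0 + X 1 + X 2) ^ d := by
    have := congrArg (MvPolynomial.map (ZMod.castHom (dvd_refl 2) K)) hP
    simpa only [map_mul, map_add, map_pow, MvPolynomial.map_X] using this
  -- substitute z ↦ x + z
  set g : Fin 3 → MvPolynomial (Fin 3) K := ![X 0, X 1, X 0 + X 2] with hg
  set Q : MvPolynomial (Fin 3) K := bind₁ g PK with hQdef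
  have hg0 : g 0 = X 0 := rfl
  have hg1 : g 1 = X 1 := rfl
  have hg2 : g 2 = X 0 + X 2 := rfl
  have hQK : ((X 0 + X 1) * X 2 * (X 0 + X 1 + X 2) : MvPolynomial (Fin 3) K) * Q =
      X 0 ^ d + X 1 ^ d + (X 0 + X 2) ^ d + (X 1 + X 2) ^ d := by
    have h := congrArg (bind₁ g) hPK
    simp only [map_mul, map_add, map_pow, bind₁_X_right, hg0, hg1, hg2] at h
    have e1 : (X 0 + (X 0 + X 2) : MvPolynomial (Fin 3) K) = X 2 := by
      linear_combination (X 0 : MvPolynomial (Fin 3) K) * h2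
    have e2 : (X 0 + X 1 + (X 0 + X 2) : MvPolynomial (Fin 3) K) = X 1 + X 2 := by
      linear_combination (X 0 : MvPolynomial (Fin 3) K) * h2
    rw [e1, e2] at h
    linear_combination h
  -- Frobenius facts
  have frob : ∀ u v : MvPolynomial (Fin 3) K,
      (u + v) ^ 2 ^ r = u ^ 2 ^ r + v ^ 2 ^ r := fun u v => add_pow_char_pow _ _ _ _
  have step : ∀ t : MvPolynomial (Fin 3) K, t * t ^ d = t ^ 2 ^ r := fun t => by
    rw [← hdN, pow_succ']
  -- main cancellation identity
  have hsum := stmt_9_aux h2 (X 0 : MvPolynomial (Fin 3) K) (X 1) (X 2)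
      (X 0 ^ d) (X 1 ^ d) (X 2 ^ d) ((X 0 + X 1 + X 2) ^ d) ((X 0 + X 2) ^ d) ((X 1 + X 2) ^ d)
      (X 0 ^ 2 ^ r) (X 1 ^ 2 ^ r) (X 2 ^ 2 ^ r)
      (step _) (step _) (step _)
      (by rw [step, frob, frob]) (by rw [step, frob]) (by rw [step, frob])
  have key : (X 0 * X 1 * X 2 * (X 0 + X 1 + X 2) *
        ((X 0 + X 1) * (X 0 + X 2) * (X 1 + X 2)) : MvPolynomial (Fin 3) K) * PK =
      (X 0 * X 1 * X 2 * (X 0 + X 1 + X 2) *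
        ((X 0 + X 1) * (X 0 + X 2) * (X 1 + X 2)) : MvPolynomial (Fin 3) K) * Q := by
    linear_combination (X 0 * X 1 * X 2 * (X 0 + X 1 + X 2) : MvPolynomial (Fin 3) K) * hPK -
      (X 0 * X 1 * (X 0 + X 2) * (X 1 + X 2) : MvPolynomial (Fin 3) K) * hQK + hsum
  -- the cofactor is nonzero
  have hne : ∀ (q : MvPolynomial (Fin 3) K) (v : Fin 3 → K), eval v q = 1 → q ≠ 0 := by
    intro q v hv h
    rw [h, map_zero] at hv
    exact zero_ne_one hv
  have hC : (X 0 * X 1 * X 2 * (X 0 + X 1 + X 2) *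
        ((X 0 + X 1) * (X 0 + X 2) * (X 1 + X 2)) : MvPolynomial (Fin 3) K) ≠ 0 := by
    have n0 : (X 0 : MvPolynomial (Fin 3) K) ≠ 0 := X_ne_zero 0
    have n1 : (X 1 : MvPolynomial (Fin 3) K) ≠ 0 := X_ne_zero 1
    have n2 : (X 2 : MvPolynomial (Fin 3) K) ≠ 0 := X_ne_zero 2
    have ns : (X 0 + X 1 + X 2 : MvPolynomial (Fin 3) K) ≠ 0 :=
      hne _ ![1, 0, 0] (by simp)
    have n01 : (X 0 + X 1 : MvPolynomial (Fin 3) K) ≠ 0 := hne _ ![1, 0, 0] (by simp)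
    have n02 : (X 0 + X 2 : MvPolynomial (Fin 3) K) ≠ 0 := hne _ ![1, 0, 0] (by simp)
    have n12 : (X 1 + X 2 : MvPolynomial (Fin 3) K) ≠ 0 := hne _ ![0, 1, 0] (by simp)
    exact mul_ne_zero (mul_ne_zero (mul_ne_zero (mul_ne_zero n0 n1) n2) ns)
      (mul_ne_zero (mul_ne_zero n01 n02) n12)
  have hPQ : PK = Q := mul_left_cancel₀ hC key
  -- conclude pointwise
  intro x y z
  have heval : eval ![x, y, z] Q = eval ![x, y, x + z] PK := by
    have h1 : (aeval ![x, y, z] : MvPolynomial (Fin 3) K →ₐ[K] K) (bind₁ g PK) =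
        aeval (fun i => aeval ![x, y, z] (g i)) PK := aeval_bind₁ _ _ _
    have h2' : (fun i => (aeval ![x, y, z] : MvPolynomial (Fin 3) K →ₐ[K] K) (g i)) =
        ![x, y, x + z] := by
      funext i
      fin_cases i <;> simp [hg0, hg1, hg2]
    have h3 : ∀ (p : MvPolynomial (Fin 3) K) (v : Fin 3 → K), aeval v p = eval v p :=
      fun p v => rfl
    rw [hQdef, ← h3, h1, h2', h3]
  rw [← heval, ← hPQ]
end

section
/- Let d be an odd integer with d > 3 and let P ∈ F_2[x,y,z] be the homogeneous polynomial of degree d − 3 with (x+y)(x+z)(y+z)·P(x,y,z) = x^d + y^d + z^d + (x+y+z)^d. Then P(x,y,z) and P(x,y,t), viewed as homogeneous polynomials in F̄_2[x,y,z,t] (F̄_2 the algebraic closure of F_2), have no common non-unit divisor; equivalently, the projective cones P(x,y,z) = 0 and P(x,y,t) = 0 in P³(F̄_2) share no irreducible component, so their intersection is a projective curve. -/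
/-!
Since `d` is odd, the monomial `z^(d-3)` occurs in `P` with coefficient `1`. A common divisor `g`
of `P(x,y,z)` and `P(x,y,t)` divides a polynomial free of `z`, so `g` is free of `z`. Writing
`P(x,y,z) = g·h`, degrees in `z` add, so `h` has `z`-degree `d - 3`, which is already the total
degree of `P`; hence `g` has total degree `0` and is a nonzero constant.
-/

open MvPolynomial

namespace MvPolynomial

variable {σ τ R : Type*}

theorem degreeOf_rename_eq_zero [CommSemiring R] {f : σ → τ} {i : τ} (hi : i ∉ Set.range f)
    (p : MvPolynomial σ R) : degreeOf i (rename f p) = 0 := by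
  by_contra h
  obtain ⟨j, -, rfl⟩ := mem_vars_rename f p (mem_vars_iff_degreeOf_ne_zero.2 h)
  exact hi ⟨j, rfl⟩

theorem IsHomogeneous.eval_pi_single_one [CommSemiring R] [DecidableEq σ]
    {p : MvPolynomial σ R} {n : ℕ} (hp : p.IsHomogeneous n) (i : σ) :
    eval (Pi.single i 1) p = coeff (Finsupp.single i n) p := by
  rw [eval_eq, Finset.sum_eq_single (Finsupp.single i n)]
  · rw [Finset.prod_eq_one fun j hj => ?_, mul_one]
    rw [Finset.mem_singleton.1 (Finsupp.support_single_subset hj), Pi.single_eq_same, one_pow]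
  · intro m hm hne
    obtain ⟨j, hmj, hji⟩ : ∃ j ∈ m.support, j ≠ i := by
      by_contra! h
      have hmi : m = Finsupp.single i (m i) :=
        Finsupp.ext fun j => by
          by_cases hj : j = i
          · simp [hj]
          · simp [Ne.symm hj, Finsupp.notMem_support_iff.1 (mt (h j) hj)]
      have hdeg : m.degree = n := by_contra fun h => mem_support_iff.1 hm (hp.coeff_eq_zero h)
      rw [hmi, Finsupp.degree_single] at hdeg
      exact hne (hdeg ▸ hmi)
    rw [Finset.prod_eq_zero hmj (by simp [hji, Finsupp.mem_support_iff.1 hmj]), mul_zero]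
  · intro h
    rw [notMem_support_iff.1 h, zero_mul]

variable [CommRing R] [IsDomain R]

theorem degreeOf_le_of_dvd {p q : MvPolynomial σ R} (i : σ) (h : q ∣ p) (hp : p ≠ 0) :
    degreeOf i q ≤ degreeOf i p := by
  obtain ⟨r, rfl⟩ := h
  rw [degreeOf_mul_eq (left_ne_zero_of_mul hp) (right_ne_zero_of_mul hp)]
  exact Nat.le_add_right _ _

theorem totalDegree_eq_zero_of_dvd_of_totalDegree_le_degreeOf {p q : MvPolynomial σ R} (i : σ)
    (hqp : q ∣ p) (hp : p ≠ 0) (hqi : degreeOf i q = 0) (hpi : p.totalDegree ≤ degreeOf i p) :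
    q.totalDegree = 0 := by
  obtain ⟨r, rfl⟩ := hqp
  have hq := left_ne_zero_of_mul hp
  have hr := right_ne_zero_of_mul hp
  rw [totalDegree_mul_of_isDomain hq hr, degreeOf_mul_eq hq hr] at hpi
  have := degreeOf_le_totalDegree r i
  omega

theorem isUnit_of_dvd_of_degreeOf_eq_zero {K : Type*} [Field K] {p q : MvPolynomial σ K} {n : ℕ}
    (i : σ) (hp : p.IsHomogeneous n) (hpi : coeff (Finsupp.single i n) p ≠ 0) (hqp : q ∣ p)
    (hqi : degreeOf i q = 0) : IsUnit q := by
  have hp0 : p ≠ 0 := fun h => hpi (by rw [h, coeff_zero])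
  have hpi' : p.totalDegree ≤ degreeOf i p :=
    hp.totalDegree_le.trans (by simpa using monomial_le_degreeOf i (mem_support_iff.2 hpi))
  have hq : q = C (coeff 0 q) := totalDegree_eq_zero_iff_eq_C.1
    (totalDegree_eq_zero_of_dvd_of_totalDegree_le_degreeOf i hqp hp0 hqi hpi')
  have hc : coeff 0 q ≠ 0 := fun h => hp0 (zero_dvd_iff.1 (by rwa [hq, h, C_0] at hqp))
  exact hq ▸ (isUnit_iff_ne_zero.2 hc).map C

end MvPolynomial

/- Differentiating `(x+y)(x+z)(y+z)·P = x^d + y^d + z^d + (x+y+z)^d` in `x` and evaluating at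
`(0,0,1)` kills every term except `P(0,0,1)` on the left and `d·1` on the right. -/
theorem eval_pi_single_two_eq_one_of_odd {d : ℕ} (hodd : Odd d) (hd : 1 < d)
    {P : MvPolynomial (Fin 3) (ZMod 2)}
    (hP : ((X 0 + X 1) * (X 0 + X 2) * (X 1 + X 2) : MvPolynomial (Fin 3) (ZMod 2)) * P =
      X 0 ^ d + X 1 ^ d + X 2 ^ d + (X 0 + X 1 + X 2) ^ d) :
    eval (Pi.single 2 1) P = 1 := by
  have h := congrArg (fun q => eval (Pi.single 2 1) (pderiv 0 q)) hP
  have hd2 : (d : ZMod 2) = 1 := ZMod.natCast_eq_one_iff_odd.2 hodd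
  simpa [Derivation.leibniz, Derivation.leibniz_pow, pderiv_X, hd2,
    zero_pow (show d - 1 ≠ 0 by omega)] using h

/-- For odd `d > 3`, the homogeneous quotient polynomial `P` of degree `d - 3` with
`(x+y)(x+z)(y+z)·P = x^d + y^d + z^d + (x+y+z)^d` over `F₂` is such that `P(x,y,z)` and
`P(x,y,t)`, viewed in four variables over the algebraic closure of `F₂`, have no common
non-unit divisor: the projective cones `P(x,y,z) = 0` and `P(x,y,t) = 0` in `P³` share no
irreducible component. -/
theorem stmt_17 (d : ℕ) (hodd : Odd d) (hd : 3 < d)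
    (P : MvPolynomial (Fin 3) (ZMod 2))
    (hhom : P.IsHomogeneous (d - 3))
    (hP : ((X 0 + X 1) * (X 0 + X 2) * (X 1 + X 2) : MvPolynomial (Fin 3) (ZMod 2)) * P =
      X 0 ^ d + X 1 ^ d + X 2 ^ d + (X 0 + X 1 + X 2) ^ d) :
    ∀ g : MvPolynomial (Fin 4) (AlgebraicClosure (ZMod 2)),
      g ∣ rename (![0, 1, 2] : Fin 3 → Fin 4)
            (P.map (algebraMap (ZMod 2) (AlgebraicClosure (ZMod 2)))) →
      g ∣ rename (![0, 1, 3] : Fin 3 → Fin 4)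
            (P.map (algebraMap (ZMod 2) (AlgebraicClosure (ZMod 2)))) →
      IsUnit g := by
  intro g hgz hgt
  set Q := P.map (algebraMap (ZMod 2) (AlgebraicClosure (ZMod 2)))
  have hQ : coeff (Finsupp.single 2 (d - 3)) Q = 1 := by
    rw [coeff_map, ← hhom.eval_pi_single_one, eval_pi_single_two_eq_one_of_odd hodd (by omega) hP,
      map_one]
  have hQz : coeff (Finsupp.single 2 (d - 3)) (rename (![0, 1, 2] : Fin 3 → Fin 4) Q) ≠ 0 := by
    have h := coeff_rename_mapDomain (![0, 1, 2] : Fin 3 → Fin 4) (by decide) Q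
      (Finsupp.single 2 (d - 3))
    rw [Finsupp.mapDomain_single, hQ] at h
    exact h ▸ one_ne_zero
  have hQt : rename (![0, 1, 3] : Fin 3 → Fin 4) Q ≠ 0 :=
    (map_ne_zero_iff _ (rename_injective _ (by decide))).2 fun h => by simp [h] at hQ
  have hg : degreeOf 2 g = 0 :=
    Nat.le_zero.1 ((degreeOf_le_of_dvd 2 hgt hQt).trans_eq (degreeOf_rename_eq_zero (by decide) Q))
  exact isUnit_of_dvd_of_degreeOf_eq_zero 2 ((hhom.map _).rename_isHomogeneous)
    hQz hgz hg
end
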